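/- For every closed set K ⊆ ℝⁿ and norm φ, the function ρ_K^φ(x) = sup{s ∈ ℝ : δ_K^φ(a + s(x − a)) = s δ_K^φ(x)} (where a ∈ ξ_K^φ(x)) is upper semicontinuous on ℝⁿ \ K. -/

import Mathlib

/-!
For `t ≥ 0` let `A t` be the set of points `x` having a nearest point `a` such that
`a + t • (x - a)` is still at distance `t * δ(x)` from `K`. The parameters `s ≥ 0` with this
property form an initial segment (triangle inequality along the ray), so `t < ρ(x)` implies
`x ∈ A t`, which in turn implies `t ≤ ρ(x)`. Each `A t` is closed: nearest points of nearby
points stay bounded, so a sequence of witnesses has a convergent subsequence, and the defining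
conditions pass to the limit by continuity of `φ` and `δ`. Hence if `ρ(x) < t < r` then
`x ∉ A t`, and the same holds near `x`, where therefore `ρ ≤ t < r`.
-/

open Set Filter Metric MeasureTheory Topology ENNReal

noncomputable section

abbrev Euc (n : ℕ) := EuclideanSpace ℝ (Fin n)

def IsNorm {n : ℕ} (φ : Euc n → ℝ) : Prop :=
  (∀ x, φ x = 0 ↔ x = 0) ∧ (∀ (c : ℝ) (x : Euc n), φ (c • x) = |c| * φ x) ∧
    (∀ x y, φ (x + y) ≤ φ x + φ y)

def StrictlyConvexNorm {n : ℕ} (φ : Euc n → ℝ) : Prop :=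
  IsNorm φ ∧ ∀ a b, φ (a + b) = φ a + φ b → φ b • a = φ a • b

def UniformlyConvexNorm {n : ℕ} (φ : Euc n → ℝ) : Prop :=
  IsNorm φ ∧ ∃ γ : ℝ, 0 < γ ∧ ConvexOn ℝ Set.univ (fun x => φ x - γ * ‖x‖)

def distφ {n : ℕ} (φ : Euc n → ℝ) (K : Set (Euc n)) (x : Euc n) : ℝ :=
  sInf {r | ∃ y ∈ K, r = φ (x - y)}

def nearφ {n : ℕ} (φ : Euc n → ℝ) (K : Set (Euc n)) (x : Euc n) : Set (Euc n) :=
  {a ∈ K | φ (x - a) = distφ φ K x}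

def rhoφ {n : ℕ} (φ : Euc n → ℝ) (K : Set (Euc n)) (x : Euc n) : ℝ≥0∞ :=
  sSup {r : ℝ≥0∞ | ∃ s : ℝ, ∃ a ∈ nearφ φ K x,
    r = ENNReal.ofReal s ∧ distφ φ K (a + s • (x - a)) = s * distφ φ K x}

def normalBundle {n : ℕ} (φ : Euc n → ℝ) (K : Set (Euc n)) : Set (Euc n × Euc n) :=
  {p | p.1 ∈ K ∧ φ p.2 = 1 ∧ ∃ s : ℝ, 0 < s ∧ distφ φ K (p.1 + s • p.2) = s}

def reachφ {n : ℕ} (φ : Euc n → ℝ) (K : Set (Euc n)) (p : Euc n × Euc n) : ℝ≥0∞ :=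
  sSup {r : ℝ≥0∞ | ∃ s : ℝ, 0 < s ∧ r = ENNReal.ofReal s ∧ distφ φ K (p.1 + s • p.2) = s}

def cutLocus {n : ℕ} (φ : Euc n → ℝ) (K : Set (Euc n)) : Set (Euc n) :=
  {x | ∃ p ∈ normalBundle φ K, reachφ φ K p ≠ ⊤ ∧
    x = p.1 + (reachφ φ K p).toReal • p.2}

def PtTwiceDiffAt {n : ℕ} (f : Euc n → ℝ) (x : Euc n) : Prop :=
  ∃ (L : Euc n →L[ℝ] ℝ) (Q : Euc n →L[ℝ] Euc n →L[ℝ] ℝ),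
    Tendsto (fun y => |f y - f x - L (y - x) - Q (y - x) (y - x)| / ‖y - x‖ ^ 2)
      (𝓝[≠] x) (𝓝 0)

namespace IsNorm

variable {n : ℕ} {φ : Euc n → ℝ}

def toSeminorm (hφ : IsNorm φ) : Seminorm ℝ (Euc n) :=
  Seminorm.of φ hφ.2.2 fun c x => by rw [hφ.2.1, Real.norm_eq_abs]

lemma nonneg (hφ : IsNorm φ) (x : Euc n) : 0 ≤ φ x :=
  apply_nonneg hφ.toSeminorm x

lemma map_sub_rev (hφ : IsNorm φ) (x y : Euc n) : φ (x - y) = φ (y - x) :=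
  _root_.map_sub_rev hφ.toSeminorm x y

lemma continuous (hφ : IsNorm φ) : Continuous φ := by
  have h := hφ.toSeminorm.convexOn.continuousOn_interior
  rw [interior_univ] at h
  exact continuousOn_univ.mp h

lemma exists_le_mul_norm (hφ : IsNorm φ) : ∃ C, 0 < C ∧ ∀ x, φ x ≤ C * ‖x‖ :=
  hφ.toSeminorm.bound_of_continuous_normedSpace hφ.continuous

lemma exists_norm_le_mul (hφ : IsNorm φ) : ∃ C, ∀ x, ‖x‖ ≤ C * φ x := by
  have hpos : ∀ x ∈ sphere (0 : Euc n) 1, φ x ≠ 0 := fun x hx h0 => by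
    simp [(hφ.1 x).1 h0] at hx
  obtain ⟨C, hC⟩ := (isCompact_sphere (0 : Euc n) 1).exists_bound_of_continuousOn
    (hφ.continuous.continuousOn.inv₀ hpos)
  refine ⟨C, fun x => ?_⟩
  rcases eq_or_ne x 0 with rfl | hx
  · simp [(hφ.1 0).2 rfl]
  have hx' : 0 < ‖x‖ := norm_pos_iff.mpr hx
  have hφx : 0 < φ x := (hφ.nonneg x).lt_of_ne' ((hφ.1 x).not.mpr hx)
  have hφu : φ (‖x‖⁻¹ • x) = ‖x‖⁻¹ * φ x := by rw [hφ.2.1, abs_inv, abs_norm]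
  have := hC (‖x‖⁻¹ • x) (by simp [norm_smul, hx'.ne'])
  rwa [Pi.inv_apply, hφu, Real.norm_of_nonneg (by positivity), mul_inv, inv_inv,
    ← div_eq_mul_inv, div_le_iff₀ hφx] at this

end IsNorm

theorem isClosed_setOf_exists_of_norm_le {E F : Type*} [TopologicalSpace E] [SequentialSpace E]
    [SeminormedAddCommGroup F] [ProperSpace F] {P : E → F → Prop}
    (hP : IsClosed {p : E × F | P p.1 p.2}) {g : E → ℝ} (hg : Continuous g)
    (hbound : ∀ x y, P x y → ‖y‖ ≤ g x) :
    IsClosed {x | ∃ y, P x y} := by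
  refine isSeqClosed_iff_isClosed.mp fun z x hz hzx => ?_
  choose y hy using hz
  obtain ⟨R, hR⟩ := ((hg.tendsto x).comp hzx).bddAbove_range
  have hyR : ∀ k, y k ∈ closedBall (0 : F) R := fun k => by
    simpa using (hbound _ _ (hy k)).trans (hR (mem_range_self k))
  obtain ⟨b, -, ψ, hψ, hyb⟩ := tendsto_subseq_of_bounded isBounded_closedBall hyR
  exact ⟨b, hP.mem_of_tendsto ((hzx.comp hψ.tendsto_atTop).prodMk_nhds hyb)
    (Eventually.of_forall fun k => hy (ψ k))⟩

section NearestPoint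

variable {n : ℕ} {φ : Euc n → ℝ} {K : Set (Euc n)}

lemma distφ_le_of_mem (hφ : IsNorm φ) {y : Euc n} (hy : y ∈ K) (x : Euc n) :
    distφ φ K x ≤ φ (x - y) :=
  csInf_le ⟨0, by rintro _ ⟨y, -, rfl⟩; exact hφ.nonneg _⟩ ⟨y, hy, rfl⟩

lemma distφ_le_add (hφ : IsNorm φ) (p q : Euc n) :
    distφ φ K p ≤ φ (p - q) + distφ φ K q := by
  rcases K.eq_empty_or_nonempty with rfl | ⟨y₀, hy₀⟩
  · simp [distφ, hφ.nonneg]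
  rw [← sub_le_iff_le_add']
  refine le_csInf ⟨_, y₀, hy₀, rfl⟩ ?_
  rintro _ ⟨y, hy, rfl⟩
  have := hφ.2.2 (p - q) (q - y)
  rw [sub_add_sub_cancel] at this
  linarith [distφ_le_of_mem hφ hy p]

lemma continuous_distφ (hφ : IsNorm φ) : Continuous (distφ φ K) := by
  obtain ⟨C, hC, hφC⟩ := hφ.exists_le_mul_norm
  refine (LipschitzWith.of_dist_le_mul (K := C.toNNReal) fun p q => ?_).continuous
  rw [Real.dist_eq, dist_eq_norm, Real.coe_toNNReal _ hC.le, abs_le]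
  have hpq := distφ_le_add (K := K) hφ p q
  have hqp := distφ_le_add (K := K) hφ q p
  rw [hφ.map_sub_rev q p] at hqp
  constructor <;> linarith [hφC (p - q)]

lemma isClosed_setOf_mem_nearφ (hφ : IsNorm φ) (hK : IsClosed K) :
    IsClosed {p : Euc n × Euc n | p.2 ∈ nearφ φ K p.1} :=
  (hK.preimage continuous_snd).inter <| isClosed_eq
    (hφ.continuous.comp (continuous_fst.sub continuous_snd))
    ((continuous_distφ hφ).comp continuous_fst)

lemma distφ_ray_eq_of_le (hφ : IsNorm φ) {x a : Euc n} (ha : a ∈ nearφ φ K x) {s t : ℝ}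
    (ht : 0 ≤ t) (hts : t ≤ s) (hs : distφ φ K (a + s • (x - a)) = s * distφ φ K x) :
    distφ φ K (a + t • (x - a)) = t * distφ φ K x := by
  have hdist : φ (x - a) = distφ φ K x := ha.2
  refine le_antisymm ?_ ?_
  · calc distφ φ K (a + t • (x - a)) ≤ φ (t • (x - a)) := by
          simpa using distφ_le_of_mem hφ ha.1 (a + t • (x - a))
      _ = t * distφ φ K x := by rw [hφ.2.1, abs_of_nonneg ht, hdist]
  · have h := distφ_le_add (K := K) hφ (a + s • (x - a)) (a + t • (x - a))
    rw [show a + s • (x - a) - (a + t • (x - a)) = (s - t) • (x - a) by module, hφ.2.1,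
      abs_of_nonneg (sub_nonneg.mpr hts), hdist, hs] at h
    linarith

lemma ofReal_le_rhoφ {x a : Euc n} (ha : a ∈ nearφ φ K x) {t : ℝ}
    (ht : distφ φ K (a + t • (x - a)) = t * distφ φ K x) :
    ENNReal.ofReal t ≤ rhoφ φ K x :=
  le_sSup ⟨t, a, ha, rfl, ht⟩

lemma exists_distφ_ray_eq_of_ofReal_lt_rhoφ (hφ : IsNorm φ) {x : Euc n} {t : ℝ} (ht : 0 ≤ t)
    (h : ENNReal.ofReal t < rhoφ φ K x) :
    ∃ a ∈ nearφ φ K x, distφ φ K (a + t • (x - a)) = t * distφ φ K x := by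
  obtain ⟨_, ⟨s, a, ha, rfl, hs⟩, hts⟩ := lt_sSup_iff.mp h
  exact ⟨a, ha, distφ_ray_eq_of_le hφ ha ht
    ((ENNReal.ofReal_lt_ofReal_iff_of_nonneg ht).mp hts).le hs⟩

lemma isClosed_setOf_exists_distφ_ray_eq (hφ : IsNorm φ) (hK : IsClosed K) (t : ℝ) :
    IsClosed {x | ∃ a ∈ nearφ φ K x, distφ φ K (a + t • (x - a)) = t * distφ φ K x} := by
  obtain ⟨C, hC⟩ := hφ.exists_norm_le_mul
  have hd := continuous_distφ (K := K) hφ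
  refine isClosed_setOf_exists_of_norm_le ((isClosed_setOf_mem_nearφ hφ hK).inter <|
    isClosed_eq (by fun_prop) (by fun_prop))
    (g := fun x => ‖x‖ + C * distφ φ K x) (by fun_prop) fun x a h => ?_
  calc ‖a‖ ≤ ‖x‖ + ‖x - a‖ := by simpa using norm_sub_le x (x - a)
    _ ≤ ‖x‖ + C * distφ φ K x := by rw [← h.1.2]; exact add_le_add_right (hC _) _

theorem upperSemicontinuous_rhoφ (hφ : IsNorm φ) (hK : IsClosed K) :
    UpperSemicontinuous (rhoφ φ K) := by
  intro x r hr
  obtain ⟨t, ht, hxt, htr⟩ := ENNReal.lt_iff_exists_real_btwn.mp hr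
  have hx : x ∉ {x | ∃ a ∈ nearφ φ K x, distφ φ K (a + t • (x - a)) = t * distφ φ K x} :=
    fun ⟨a, ha, h⟩ => (ofReal_le_rhoφ ha h).not_gt hxt
  filter_upwards [(isClosed_setOf_exists_distφ_ray_eq hφ hK t).isOpen_compl.mem_nhds hx]
    with z hz
  exact (not_lt.mp fun h => hz (exists_distφ_ray_eq_of_ofReal_lt_rhoφ hφ ht h)).trans_lt htr

end NearestPoint

theorem stmt6 {n : ℕ} (φ : Euc n → ℝ) (hφ : StrictlyConvexNorm φ) (K : Set (Euc n))
    (hK : IsClosed K) :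
    UpperSemicontinuousOn (rhoφ φ K) Kᶜ :=
  (upperSemicontinuous_rhoφ hφ.1 hK).upperSemicontinuousOn _
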